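/- arXiv:2204.05367 — 3 statements merged into one kernel-verified Lean document; each statement's English description precedes it below -/
import Mathlib

section
/- Let 0 < f < 1 and define v : [−1,1] → ℝ by v(y) = sgn(y)·(|y| − 1 + f)₊. Then v is the unique minimizer of the slice energy H among all w ∈ W^{1,2}([−1,1]) with w(−1) = −f and w(1) = f, and its energy is H(v) = 4f. -/
open MeasureTheory Set
open Filter Topology

noncomputable section

/-- The slice energy `H(w) = ∫_{-1}^1 (w')² dy + |{y ∈ [-1,1] : w(y) ≠ 0}|`. -/
def Hslice (w : ℝ → ℝ) : ℝ :=
  (∫ y in Icc (-1 : ℝ) 1, (deriv w y)^2) +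
    (volume {y ∈ Icc (-1 : ℝ) 1 | w y ≠ 0}).toReal

/-- Membership in `W^{1,2}([-1,1])`, identified with the (absolutely) continuous
representative: `w` is the integral of its derivative, which belongs to `L²`. -/
def MemW12slice (w : ℝ → ℝ) : Prop :=
  MemLp (deriv w) 2 (volume.restrict (Icc (-1 : ℝ) 1)) ∧
  ∀ t ∈ Icc (-1 : ℝ) 1, w t = w (-1) + ∫ s in (-1 : ℝ)..t, deriv w s

def Vf (f : ℝ) : ℝ → ℝ := fun y => min y (f - 1) + 1 - f + max (y - 1 + f) 0

def Gf (f : ℝ) : ℝ → ℝ := fun y => if f - 1 ≤ y ∧ y < 1 - f then 0 else 1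

variable {f : ℝ}

lemma Vf_eq (hf0 : 0 < f) (hf1 : f < 1) (y : ℝ) :
    Real.sign y * max (|y| - 1 + f) 0 = Vf f y := by
  unfold Vf
  rcases lt_trichotomy y 0 with h | h | h
  · rw [Real.sign_of_neg h, abs_of_neg h]
    have h1 : y - 1 + f < 0 := by linarith
    rw [max_eq_right h1.le]
    rcases le_total y (f - 1) with h2 | h2
    · rw [min_eq_left h2, max_eq_left (by linarith : (0:ℝ) ≤ -y - 1 + f)]
      ring
    · rw [min_eq_right h2, max_eq_right (by linarith : -y - 1 + f ≤ 0)]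
      ring
  · subst h
    rw [Real.sign_zero, zero_mul, min_eq_right (by linarith : f - 1 ≤ (0:ℝ)),
      max_eq_right (by linarith : (0:ℝ) - 1 + f ≤ 0)]
    ring
  · rw [Real.sign_of_pos h, abs_of_pos h, min_eq_right (by linarith : f - 1 ≤ y)]
    ring

lemma Vf_left (hf1 : f < 1) {y : ℝ} (h : y ≤ f - 1) : Vf f y = y + 1 - f := by
  unfold Vf
  rw [min_eq_left h, max_eq_right (by linarith : y - 1 + f ≤ 0)]
  ring

lemma Vf_mid (hy1 : f - 1 ≤ y) (hy2 : y ≤ 1 - f) : Vf f y = 0 := by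
  unfold Vf
  rw [min_eq_right hy1, max_eq_right (by linarith : y - 1 + f ≤ 0)]
  ring

lemma Vf_right (hf1 : f < 1) {y : ℝ} (h : 1 - f ≤ y) : Vf f y = y - 1 + f := by
  unfold Vf
  rw [min_eq_right (by linarith : f - 1 ≤ y), max_eq_left (by linarith : (0:ℝ) ≤ y - 1 + f)]
  ring

lemma Vf_cont : Continuous (Vf f) := by
  unfold Vf
  fun_prop

lemma Gf_meas : Measurable (Gf f) := by
  unfold Gf
  have : {y : ℝ | f - 1 ≤ y ∧ y < 1 - f} = Ico (f - 1) (1 - f) := rfl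
  exact Measurable.ite (by rw [this]; exact measurableSet_Ico) measurable_const measurable_const

lemma Gf_bd (y : ℝ) : ‖Gf f y‖ ≤ 1 := by
  unfold Gf; split_ifs <;> simp

lemma Gf_sq (y : ℝ) : (Gf f y)^2 = Gf f y := by
  unfold Gf; split_ifs <;> norm_num

lemma Gf_intOn (s : Set ℝ) (hs : volume s < ⊤) : IntegrableOn (Gf f) s volume := by
  refine Integrable.mono' (g := fun _ => (1:ℝ)) (integrableOn_const hs.ne) (Gf_meas.aestronglyMeasurable) ?_
  exact ae_of_all _ fun y => Gf_bd y

lemma Gf_ii (a b : ℝ) : IntervalIntegrable (Gf f) volume a b :=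
  (Gf_intOn _ (by exact measure_Icc_lt_top)).intervalIntegrable

/-- right derivative everywhere -/
lemma Vf_hasDerivWithinAt (hf0 : 0 < f) (hf1 : f < 1) (x : ℝ) :
    HasDerivWithinAt (Vf f) (Gf f x) (Ioi x) x := by
  rcases lt_or_ge x (f - 1) with hx | hx
  · have hGx : Gf f x = 1 := by unfold Gf; rw [if_neg]; push_neg; intro h; linarith
    rw [hGx]
    have h1 : HasDerivAt (fun z : ℝ => z + 1 - f) 1 x := by
      simpa using (((hasDerivAt_id x).add_const 1).sub_const f)
    refine (h1.congr_of_eventuallyEq ?_).hasDerivWithinAt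
    filter_upwards [Iio_mem_nhds hx] with z hz
    rw [Vf_left hf1 (le_of_lt hz)]
  · rcases lt_or_ge x (1 - f) with hx2 | hx2
    · have hGx : Gf f x = 0 := by unfold Gf; rw [if_pos ⟨hx, hx2⟩]
      rw [hGx]
      refine (hasDerivWithinAt_const x (Ioi x) (0:ℝ)).congr_of_eventuallyEq ?_ ?_
      · filter_upwards [inter_mem_nhdsWithin (Ioi x) (Iio_mem_nhds hx2)] with z hz
        exact Vf_mid (le_trans hx (le_of_lt hz.1)) (le_of_lt hz.2)
      · exact Vf_mid hx hx2.le
    · have hGx : Gf f x = 1 := by unfold Gf; rw [if_neg]; push_neg; intro h; linarith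
      rw [hGx]
      have h1 : HasDerivAt (fun z : ℝ => z - 1 + f) 1 x := by
        simpa using ((hasDerivAt_id x).sub_const 1).add_const f
      refine (h1.hasDerivWithinAt).congr ?_ ?_
      · intro z hz
        exact Vf_right hf1 (le_trans hx2 (le_of_lt hz))
      · exact Vf_right hf1 hx2

lemma Vf_ftc (hf0 : 0 < f) (hf1 : f < 1) {t : ℝ} (ht : -1 ≤ t) :
    ∫ s in (-1:ℝ)..t, Gf f s = Vf f t - Vf f (-1) := by
  refine intervalIntegral.integral_eq_sub_of_hasDeriv_right_of_le ht
    (Vf_cont.continuousOn) (fun x _ => Vf_hasDerivWithinAt hf0 hf1 x) (Gf_ii _ _)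

lemma Vf_deriv_ae (hf0 : 0 < f) (hf1 : f < 1) :
    deriv (Vf f) =ᵐ[volume] Gf f := by
  have hsub : {y : ℝ | ¬ deriv (Vf f) y = Gf f y} ⊆ {f - 1, 1 - f} := by
    intro y hy
    by_contra hmem
    simp only [mem_insert_iff, mem_singleton_iff] at hmem
    push_neg at hmem
    apply hy
    rcases lt_trichotomy y (f - 1) with h | h | h
    · have he : (fun z => Vf f z) =ᶠ[𝓝 y] fun z : ℝ => z + 1 - f := by
        filter_upwards [Iio_mem_nhds h] with z hz
        exact Vf_left hf1 (le_of_lt hz)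
      rw [he.deriv_eq]
      have h1 : HasDerivAt (fun z : ℝ => z + 1 - f) 1 y := by
        simpa using (((hasDerivAt_id y).add_const 1).sub_const f)
      rw [h1.deriv]
      unfold Gf; rw [if_neg]; push_neg; intro h'; linarith
    · exact absurd h hmem.1
    · rcases lt_trichotomy y (1 - f) with h2 | h2 | h2
      · have he : (fun z => Vf f z) =ᶠ[𝓝 y] fun _ : ℝ => (0:ℝ) := by
          filter_upwards [Ioo_mem_nhds h h2] with z hz
          exact Vf_mid hz.1.le hz.2.le
        rw [he.deriv_eq, deriv_const]
        unfold Gf; rw [if_pos ⟨h.le, h2⟩]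
      · exact absurd h2 hmem.2
      · have he : (fun z => Vf f z) =ᶠ[𝓝 y] fun z : ℝ => z - 1 + f := by
          filter_upwards [Ioi_mem_nhds h2] with z hz
          exact Vf_right hf1 (le_of_lt hz)
        rw [he.deriv_eq]
        have h1 : HasDerivAt (fun z : ℝ => z - 1 + f) 1 y := by
          simpa using ((hasDerivAt_id y).sub_const 1).add_const f
        rw [h1.deriv]
        unfold Gf; rw [if_neg]; push_neg; intro h'; linarith
  have : volume {y : ℝ | ¬ deriv (Vf f) y = Gf f y} = 0 :=
    measure_mono_null hsub (((Set.finite_singleton _).insert _).measure_zero _)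
  exact ae_iff.2 this

instance : IsFiniteMeasure (volume.restrict (Icc (-1 : ℝ) 1)) :=
  ⟨by rw [Measure.restrict_apply_univ]; exact measure_Icc_lt_top⟩

lemma Vf_intervalIntegral_deriv (hf0 : 0 < f) (hf1 : f < 1) {t : ℝ} (ht : -1 ≤ t) :
    ∫ s in (-1:ℝ)..t, deriv (Vf f) s = Vf f t - Vf f (-1) := by
  rw [← Vf_ftc hf0 hf1 ht]
  refine intervalIntegral.integral_congr_ae ?_
  filter_upwards [Vf_deriv_ae hf0 hf1] with y hy _
  exact hy

lemma Vf_mem (hf0 : 0 < f) (hf1 : f < 1) : MemW12slice (Vf f) := by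
  constructor
  · refine MemLp.of_bound (measurable_deriv _).aestronglyMeasurable 1 ?_
    filter_upwards [ae_restrict_of_ae (Vf_deriv_ae hf0 hf1)] with y hy
    rw [hy]; exact Gf_bd y
  · intro t ht
    rw [Vf_intervalIntegral_deriv hf0 hf1 ht.1]
    ring

lemma Vf_bdval (hf0 : 0 < f) (hf1 : f < 1) : Vf f (-1) = -f ∧ Vf f 1 = f := by
  constructor
  · rw [Vf_left hf1 (by linarith)]; ring
  · rw [Vf_right hf1 (by linarith)]; ring

lemma Vf_energy (hf0 : 0 < f) (hf1 : f < 1) : Hslice (Vf f) = 4 * f := by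
  have hInt : (∫ y in Icc (-1:ℝ) 1, (deriv (Vf f) y)^2) = 2 * f := by
    have h1 : (∫ y in Icc (-1:ℝ) 1, (deriv (Vf f) y)^2) = ∫ y in Icc (-1:ℝ) 1, Gf f y := by
      refine integral_congr_ae ?_
      filter_upwards [ae_restrict_of_ae (Vf_deriv_ae hf0 hf1)] with y hy
      rw [hy, Gf_sq]
    rw [h1, integral_Icc_eq_integral_Ioc, ← intervalIntegral.integral_of_le (by linarith : (-1:ℝ) ≤ 1),
      Vf_ftc hf0 hf1 (by linarith : (-1:ℝ) ≤ (1:ℝ)), (Vf_bdval hf0 hf1).1, (Vf_bdval hf0 hf1).2]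
    ring
  have hSet : {y ∈ Icc (-1:ℝ) 1 | Vf f y ≠ 0} = Ico (-1:ℝ) (f-1) ∪ Ioc (1-f) 1 := by
    ext y
    simp only [mem_sep_iff, mem_Icc, mem_union, mem_Ico, mem_Ioc]
    constructor
    · rintro ⟨⟨h1, h2⟩, hne⟩
      rcases lt_or_ge y (f-1) with h | h
      · exact Or.inl ⟨h1, h⟩
      · rcases le_or_gt y (1-f) with h' | h'
        · exact absurd (Vf_mid h h') hne
        · exact Or.inr ⟨h', h2⟩
    · rintro (⟨h1, h2⟩ | ⟨h1, h2⟩)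
      · refine ⟨⟨h1, by linarith⟩, ?_⟩
        rw [Vf_left hf1 h2.le]
        intro hc; linarith
      · refine ⟨⟨by linarith, h2⟩, ?_⟩
        rw [Vf_right hf1 h1.le]
        intro hc; linarith
  have hvol : (volume {y ∈ Icc (-1:ℝ) 1 | Vf f y ≠ 0}).toReal = 2 * f := by
    rw [hSet, measure_union ?hd measurableSet_Ioc, Real.volume_Ico, Real.volume_Ioc]
    · rw [← ENNReal.ofReal_add (by linarith) (by linarith)]
      rw [ENNReal.toReal_ofReal (by linarith)]
      ring
    case hd =>
      rw [Set.disjoint_left]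
      rintro a ⟨_, h2⟩ ⟨h3, _⟩
      linarith
  unfold Hslice
  rw [hInt, hvol]; ring

lemma countable_bad (w : ℝ → ℝ) : Set.Countable {y : ℝ | w y = 0 ∧ deriv w y ≠ 0} := by
  set D := {y : ℝ | w y = 0 ∧ deriv w y ≠ 0} with hD
  have hnhds : ∀ y ∈ D, {y} ∈ 𝓝[D] y := by
    intro y hy
    obtain ⟨hwy, hdy⟩ := hy
    by_cases hdiff : DifferentiableAt ℝ w y
    · have hD' : HasDerivAt w (deriv w y) y := hdiff.hasDerivAt
      have ht := hasDerivAt_iff_tendsto_slope.1 hD'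
      have hne : ∀ᶠ z in 𝓝[≠] y, slope w y z ≠ 0 := ht.eventually_ne hdy
      have hne' : ∀ᶠ z in 𝓝[≠] y, z ∉ D := by
        refine hne.mono fun z hz hzD => hz ?_
        rw [slope_def_field, hzD.1, hwy]
        simp
      rw [eventually_nhdsWithin_iff] at hne'
      rw [mem_nhdsWithin_iff_eventually]
      refine hne'.mono fun z hz hzD => ?_
      by_contra hzy
      exact hz (by simpa using hzy) hzD
    · exact absurd (deriv_zero_of_not_differentiableAt hdiff) hdy
  obtain ⟨t, hts, htc, htcov⟩ := TopologicalSpace.countable_cover_nhdsWithin hnhds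
  refine htc.mono ?_
  refine htcov.trans ?_
  simp

lemma derivZero (w : ℝ → ℝ) : volume {y : ℝ | w y = 0 ∧ deriv w y ≠ 0} = 0 :=
  (countable_bad w).measure_zero _

lemma key (hf0 : 0 < f) (hf1 : f < 1) (w : ℝ → ℝ) (hw : MemW12slice w)
    (hm : w (-1) = -f) (hp : w 1 = f) :
    MeasurableSet {y ∈ Icc (-1:ℝ) 1 | w y ≠ 0} ∧
    IntegrableOn (deriv w) (Icc (-1:ℝ) 1) volume ∧
    IntegrableOn (fun y => (deriv w y - 1)^2) {y ∈ Icc (-1:ℝ) 1 | w y ≠ 0} volume ∧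
    Hslice w = (∫ y in Icc (-1:ℝ) 1 \ {y ∈ Icc (-1:ℝ) 1 | w y ≠ 0}, (deriv w y)^2)
      + (∫ y in {y ∈ Icc (-1:ℝ) 1 | w y ≠ 0}, (deriv w y - 1)^2) + 4*f := by
  set A := {y ∈ Icc (-1:ℝ) 1 | w y ≠ 0} with hA
  set Z := Icc (-1:ℝ) 1 \ A with hZ
  have hAsub : A ⊆ Icc (-1:ℝ) 1 := fun y hy => hy.1
  have hZsub : Z ⊆ Icc (-1:ℝ) 1 := diff_subset
  have hg1 : IntegrableOn (deriv w) (Icc (-1:ℝ) 1) volume := hw.1.integrable one_le_two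
  have hg2 : IntegrableOn (fun y => (deriv w y)^2) (Icc (-1:ℝ) 1) volume := hw.1.integrable_sq
  -- continuity of w on Icc
  have hc : ContinuousOn w (Icc (-1:ℝ) 1) := by
    have hWc : ContinuousOn (fun t => w (-1) + ∫ s in Ioc (-1:ℝ) t, deriv w s) (Icc (-1:ℝ) 1) :=
      continuousOn_const.add (intervalIntegral.continuousOn_primitive hg1)
    refine hWc.congr ?_
    intro t ht
    rw [hw.2 t ht, intervalIntegral.integral_of_le ht.1]
  -- measurability of A
  have hAmeas : MeasurableSet A := by
    obtain ⟨u, hu, hueq⟩ := continuousOn_iff'.1 hc {(0:ℝ)}ᶜ isOpen_compl_singleton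
    have : A = u ∩ Icc (-1:ℝ) 1 := by
      rw [← hueq]
      ext y
      simp only [hA, mem_sep_iff, mem_inter_iff, mem_preimage, mem_compl_iff,
        mem_singleton_iff, mem_setOf_eq]
      tauto
    rw [this]
    exact hu.measurableSet.inter measurableSet_Icc
  have hZmeas : MeasurableSet Z := measurableSet_Icc.diff hAmeas
  have hAvol : volume A < ⊤ := lt_of_le_of_lt (measure_mono hAsub) measure_Icc_lt_top
  have hdisj : Disjoint Z A := disjoint_sdiff_left
  have hunion : Z ∪ A = Icc (-1:ℝ) 1 := diff_union_of_subset hAsub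
  -- deriv w vanishes a.e. on Z
  have hZ0 : ∀ᵐ y ∂(volume.restrict Z), deriv w y = 0 := by
    rw [ae_restrict_iff' hZmeas]
    rw [ae_iff]
    refine measure_mono_null ?_ (derivZero w)
    intro y hy
    simp only [mem_setOf_eq, Classical.not_imp] at hy
    refine ⟨?_, hy.2⟩
    by_contra hne
    exact (hy.1.2 ⟨hy.1.1, hne⟩)
  -- total integral of deriv w
  have hI : ∫ y in Icc (-1:ℝ) 1, deriv w y = 2 * f := by
    have h1 := hw.2 1 ⟨by linarith, le_refl 1⟩
    rw [hm, hp, intervalIntegral.integral_of_le (by linarith : (-1:ℝ) ≤ 1)] at h1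
    rw [integral_Icc_eq_integral_Ioc]
    linarith
  have hZint : ∫ y in Z, deriv w y = 0 := by
    rw [integral_eq_zero_of_ae hZ0]
  have hsplit : ∫ y in Icc (-1:ℝ) 1, deriv w y
      = (∫ y in Z, deriv w y) + ∫ y in A, deriv w y := by
    rw [← hunion]
    exact setIntegral_union hdisj hAmeas (hg1.mono_set hZsub) (hg1.mono_set hAsub)
  have hAint : ∫ y in A, deriv w y = 2 * f := by
    rw [hsplit, hZint] at hI; linarith
  have hsplit2 : ∫ y in Icc (-1:ℝ) 1, (deriv w y)^2
      = (∫ y in Z, (deriv w y)^2) + ∫ y in A, (deriv w y)^2 := by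
    rw [← hunion]
    exact setIntegral_union hdisj hAmeas (hg2.mono_set hZsub) (hg2.mono_set hAsub)
  have hconst : IntegrableOn (fun _ : ℝ => (1:ℝ)) A volume := integrableOn_const hAvol.ne
  have hsubint : IntegrableOn (fun y => (deriv w y)^2 - 2 * deriv w y) A volume :=
    (hg2.mono_set hAsub).sub ((hg1.mono_set hAsub).const_mul 2)
  have hexp : (fun y => (deriv w y - 1)^2)
      = fun y => ((deriv w y)^2 - 2 * deriv w y) + 1 := by
    funext y; ring
  have hint2 : IntegrableOn (fun y => (deriv w y - 1)^2) A volume := by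
    rw [hexp]; exact hsubint.add hconst
  have hAexp : ∫ y in A, (deriv w y - 1)^2
      = (∫ y in A, (deriv w y)^2) - 2 * (2 * f) + (volume A).toReal := by
    rw [hexp, integral_add hsubint hconst,
      integral_sub (hg2.mono_set hAsub) ((hg1.mono_set hAsub).const_mul 2),
      MeasureTheory.integral_const_mul, hAint, setIntegral_const, measureReal_def, smul_eq_mul, mul_one]
  have hH : Hslice w = (∫ y in Icc (-1:ℝ) 1, (deriv w y)^2) + (volume A).toReal := rfl
  refine ⟨hAmeas, hg1, hint2, ?_⟩
  rw [hH, hsplit2]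
  rw [hAexp]
  ring

lemma lower (hf0 : 0 < f) (hf1 : f < 1) (w : ℝ → ℝ) (hw : MemW12slice w)
    (hm : w (-1) = -f) (hp : w 1 = f) : 4 * f ≤ Hslice w := by
  obtain ⟨_, _, _, hH⟩ := key hf0 hf1 w hw hm hp
  have h1 : (0:ℝ) ≤ ∫ y in Icc (-1:ℝ) 1 \ {y ∈ Icc (-1:ℝ) 1 | w y ≠ 0}, (deriv w y)^2 :=
    integral_nonneg fun y => sq_nonneg _
  have h2 : (0:ℝ) ≤ ∫ y in {y ∈ Icc (-1:ℝ) 1 | w y ≠ 0}, (deriv w y - 1)^2 :=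
    integral_nonneg fun y => sq_nonneg _
  linarith

lemma unique (hf0 : 0 < f) (hf1 : f < 1) (w : ℝ → ℝ) (hw : MemW12slice w)
    (hm : w (-1) = -f) (hp : w 1 = f) (hle : Hslice w ≤ 4 * f) :
    ∀ y ∈ Icc (-1:ℝ) 1, w y = Vf f y := by
  obtain ⟨hAmeas, hg1, hint2, hH⟩ := key hf0 hf1 w hw hm hp
  set A := {y ∈ Icc (-1:ℝ) 1 | w y ≠ 0} with hA
  set Z := Icc (-1:ℝ) 1 \ A with hZdef
  have hAsub : A ⊆ Icc (-1:ℝ) 1 := fun y hy => hy.1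
  have hZmeas : MeasurableSet Z := measurableSet_Icc.diff hAmeas
  have hdisj : Disjoint Z A := disjoint_sdiff_left
  have hunion : Z ∪ A = Icc (-1:ℝ) 1 := diff_union_of_subset hAsub
  have h1 : (0:ℝ) ≤ ∫ y in Z, (deriv w y)^2 := integral_nonneg fun y => sq_nonneg _
  have h2 : (0:ℝ) ≤ ∫ y in A, (deriv w y - 1)^2 := integral_nonneg fun y => sq_nonneg _
  have hI2 : ∫ y in A, (deriv w y - 1)^2 = 0 := by linarith
  have hA1 : ∀ᵐ y ∂(volume.restrict A), deriv w y = 1 := by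
    have h := (setIntegral_eq_zero_iff_of_nonneg_ae
      (ae_of_all _ fun y => sq_nonneg (deriv w y - 1)) hint2).1 hI2
    filter_upwards [h] with y hy
    have h0 : deriv w y - 1 = 0 := by
      have : (deriv w y - 1)^2 = 0 := hy
      exact pow_eq_zero_iff two_ne_zero |>.1 this
    linarith
  have hZ0 : ∀ᵐ y ∂(volume.restrict Z), deriv w y = 0 := by
    rw [ae_restrict_iff' hZmeas, ae_iff]
    refine measure_mono_null ?_ (derivZero w)
    intro y hy
    simp only [mem_setOf_eq, Classical.not_imp] at hy
    refine ⟨?_, hy.2⟩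
    by_contra hne
    exact (hy.1.2 ⟨hy.1.1, hne⟩)
  have hbound : ∀ᵐ y ∂(volume.restrict (Icc (-1:ℝ) 1)), 0 ≤ deriv w y ∧ deriv w y ≤ 1 := by
    have hre : volume.restrict (Icc (-1:ℝ) 1) = volume.restrict Z + volume.restrict A := by
      rw [← hunion, Measure.restrict_union hdisj hAmeas]
    rw [hre, ae_add_measure_iff]
    constructor
    · filter_upwards [hZ0] with y hy; rw [hy]; norm_num
    · filter_upwards [hA1] with y hy; rw [hy]; norm_num
  have hii : ∀ s t : ℝ, s ∈ Icc (-1:ℝ) 1 → t ∈ Icc (-1:ℝ) 1 →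
      IntervalIntegrable (deriv w) volume s t := fun s t hs ht =>
    (hg1.mono_set (uIcc_subset_Icc hs ht)).intervalIntegrable
  have hdiffw : ∀ s t : ℝ, s ∈ Icc (-1:ℝ) 1 → t ∈ Icc (-1:ℝ) 1 →
      w t - w s = ∫ y in s..t, deriv w y := by
    intro s t hs ht
    have hmem : (-1:ℝ) ∈ Icc (-1:ℝ) 1 := ⟨le_refl _, by norm_num⟩
    have hsub := intervalIntegral.integral_interval_sub_left
      (hii (-1) t hmem ht) (hii (-1) s hmem hs)
    rw [hw.2 t ht, hw.2 s hs]
    linarith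
  have hup : ∀ s t : ℝ, s ∈ Icc (-1:ℝ) 1 → t ∈ Icc (-1:ℝ) 1 → s ≤ t →
      w t - w s ≤ t - s := by
    intro s t hs ht hst
    rw [hdiffw s t hs ht, intervalIntegral.integral_of_le hst]
    have hsub : Ioc s t ⊆ Icc (-1:ℝ) 1 := fun y hy => ⟨le_trans hs.1 hy.1.le, le_trans hy.2 ht.2⟩
    have hb := hbound.filter_mono (ae_mono (Measure.restrict_mono hsub le_rfl))
    calc (∫ y in Ioc s t, deriv w y) ≤ ∫ _ in Ioc s t, (1:ℝ) := by
          refine integral_mono_ae ((hg1.mono_set hsub))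
            (integrableOn_const measure_Ioc_lt_top.ne) ?_
          filter_upwards [hb] with y hy using hy.2
      _ = t - s := by
          rw [setIntegral_const, measureReal_def, Real.volume_Ioc, smul_eq_mul, mul_one,
            ENNReal.toReal_ofReal (by linarith)]
  have hlo : ∀ s t : ℝ, s ∈ Icc (-1:ℝ) 1 → t ∈ Icc (-1:ℝ) 1 → s ≤ t →
      0 ≤ w t - w s := by
    intro s t hs ht hst
    rw [hdiffw s t hs ht, intervalIntegral.integral_of_le hst]
    have hsub : Ioc s t ⊆ Icc (-1:ℝ) 1 := fun y hy => ⟨le_trans hs.1 hy.1.le, le_trans hy.2 ht.2⟩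
    have hb := hbound.filter_mono (ae_mono (Measure.restrict_mono hsub le_rfl))
    refine integral_nonneg_of_ae ?_
    filter_upwards [hb] with y hy using hy.1
  have hmem1 : (-1:ℝ) ∈ Icc (-1:ℝ) 1 := ⟨le_refl _, by norm_num⟩
  have hmem2 : (1:ℝ) ∈ Icc (-1:ℝ) 1 := ⟨by norm_num, le_refl _⟩
  have hlefteq : ∀ t ∈ Icc (-1:ℝ) (f-1), w t = t + 1 - f := by
    intro t ht
    have ht1 : t ∈ Icc (-1:ℝ) 1 := ⟨ht.1, by linarith [ht.2]⟩
    have hIoo_sub : Ioo (-1:ℝ) t ⊆ A := by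
      intro y hy
      have hy1 : y ∈ Icc (-1:ℝ) 1 := ⟨hy.1.le, by linarith [hy.2, ht.2]⟩
      refine ⟨hy1, fun h0 => ?_⟩
      have hu := hup (-1) y hmem1 hy1 hy.1.le
      rw [hm, h0] at hu
      have : y < f - 1 := lt_of_lt_of_le hy.2 ht.2
      linarith
    have hone : ∀ᵐ y ∂(volume.restrict (Ioo (-1:ℝ) t)), deriv w y = 1 :=
      hA1.filter_mono (ae_mono (Measure.restrict_mono hIoo_sub le_rfl))
    have hd := hdiffw (-1) t hmem1 ht1
    rw [hm, intervalIntegral.integral_of_le ht.1, integral_Ioc_eq_integral_Ioo] at hd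
    have hIeq : ∫ y in Ioo (-1:ℝ) t, deriv w y = ∫ _ in Ioo (-1:ℝ) t, (1:ℝ) :=
      integral_congr_ae (hone.mono fun y hy => by rw [hy])
    rw [hIeq, setIntegral_const, measureReal_def, Real.volume_Ioo, smul_eq_mul, mul_one,
      ENNReal.toReal_ofReal (by linarith [ht.1])] at hd
    linarith
  have hrighteq : ∀ t ∈ Icc (1-f) (1:ℝ), w t = t - 1 + f := by
    intro t ht
    have ht1 : t ∈ Icc (-1:ℝ) 1 := ⟨by linarith [ht.1], ht.2⟩
    have hIoo_sub : Ioo t (1:ℝ) ⊆ A := by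
      intro y hy
      have hy1 : y ∈ Icc (-1:ℝ) 1 := ⟨by linarith [hy.1, ht.1], hy.2.le⟩
      refine ⟨hy1, fun h0 => ?_⟩
      have hu := hup y 1 hy1 hmem2 hy.2.le
      rw [hp, h0] at hu
      have : 1 - f < y := lt_of_le_of_lt ht.1 hy.1
      linarith
    have hone : ∀ᵐ y ∂(volume.restrict (Ioo t (1:ℝ))), deriv w y = 1 :=
      hA1.filter_mono (ae_mono (Measure.restrict_mono hIoo_sub le_rfl))
    have hd := hdiffw t 1 ht1 hmem2
    rw [hp, intervalIntegral.integral_of_le ht.2, integral_Ioc_eq_integral_Ioo] at hd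
    have hIeq : ∫ y in Ioo t (1:ℝ), deriv w y = ∫ _ in Ioo t (1:ℝ), (1:ℝ) :=
      integral_congr_ae (hone.mono fun y hy => by rw [hy])
    rw [hIeq, setIntegral_const, measureReal_def, Real.volume_Ioo, smul_eq_mul, mul_one,
      ENNReal.toReal_ofReal (by linarith [ht.2])] at hd
    linarith
  intro y hy
  rcases le_or_gt y (f-1) with h | h
  · rw [hlefteq y ⟨hy.1, h⟩, Vf_left hf1 h]
  · rcases lt_or_ge y (1-f) with h2 | h2
    · have e1 : w (f-1) = 0 := by
        rw [hlefteq (f-1) ⟨by linarith, le_refl _⟩]; ring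
      have e2 : w (1-f) = 0 := by
        rw [hrighteq (1-f) ⟨le_refl _, by linarith⟩]; ring
      have hfm : (f-1:ℝ) ∈ Icc (-1:ℝ) 1 := ⟨by linarith, by linarith⟩
      have hfp : (1-f:ℝ) ∈ Icc (-1:ℝ) 1 := ⟨by linarith, by linarith⟩
      have m1 := hlo (f-1) y hfm hy (le_of_lt h)
      have m2 := hlo y (1-f) hy hfp h2.le
      rw [Vf_mid h.le h2.le]
      linarith
    · rw [hrighteq y ⟨h2, hy.2⟩, Vf_right hf1 h2]

/-- for `0 < f < 1`, `v(y) = sgn(y)·(|y| - 1 + f)₊` is the unique minimizer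
of the slice energy among `W^{1,2}` functions with boundary values `∓f`, and `H(v) = 4f`. -/
theorem statement4 (f : ℝ) (hf0 : 0 < f) (hf1 : f < 1) :
    MemW12slice (fun y => Real.sign y * max (|y| - 1 + f) 0) ∧
    Hslice (fun y => Real.sign y * max (|y| - 1 + f) 0) = 4 * f ∧
    (∀ w : ℝ → ℝ, MemW12slice w → w (-1) = -f → w 1 = f →
      Hslice (fun y => Real.sign y * max (|y| - 1 + f) 0) ≤ Hslice w) ∧
    (∀ w : ℝ → ℝ, MemW12slice w → w (-1) = -f → w 1 = f →
      Hslice w ≤ Hslice (fun y => Real.sign y * max (|y| - 1 + f) 0) →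
      ∀ y ∈ Icc (-1 : ℝ) 1, w y = Real.sign y * max (|y| - 1 + f) 0) := by
  have hVeq : (fun y => Real.sign y * max (|y| - 1 + f) 0) = Vf f := funext (Vf_eq hf0 hf1)
  refine ⟨?_, ?_, ?_, ?_⟩
  · rw [hVeq]; exact Vf_mem hf0 hf1
  · rw [hVeq]; exact Vf_energy hf0 hf1
  · intro w hw h1 h2
    rw [hVeq, Vf_energy hf0 hf1]
    exact lower hf0 hf1 w hw h1 h2
  · intro w hw h1 h2 hle y hy
    rw [hVeq, Vf_energy hf0 hf1] at hle
    rw [Vf_eq hf0 hf1 y]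
    exact unique hf0 hf1 w hw h1 h2 hle y hy
end
end

section
/- Let ε ∈ (0,1), δ ∈ (0,1/2), and f ≥ 3/4, and let w ∈ W^{1,2}([−1,1]) with w(−1) = −f and w(1) = f. If there exists y ∈ [−1,1] with 1 − |y| < ε and |w(y)| < δ, then H(w) ≥ (f − δ)²/ε. In particular, taking ε = 1/44 and δ = 1/4: if w has boundary values ±f with 3/4 ≤ f ≤ 2 and there exists y with 1 − |y| < 1/44 and |w(y)| < 1/4, then H(w) ≥ H(v) + 1 for any v with H(v) ≤ 10 (which holds for the slice minimizer v_N(x,·)). -/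
open MeasureTheory Set

noncomputable section

/-- Cauchy–Schwarz for set integrals on an interval. -/
lemma cs_aux {g : ℝ → ℝ} {a b : ℝ} (hab : a ≤ b)
    (hg : MemLp g 2 (volume.restrict (Ioc a b))) :
    (∫ s in a..b, g s) ^ 2 ≤ (b - a) * ∫ s in Ioc a b, g s ^ 2 := by
  set μ := volume.restrict (Ioc a b)
  have hpq : Real.HolderConjugate 2 2 := Real.HolderConjugate.two_two
  have h1 : MemLp (fun _ : ℝ => (1 : ℝ)) (ENNReal.ofReal 2) μ := by
    rw [show ENNReal.ofReal 2 = 2 by norm_num]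
    exact memLp_const 1
  have hg2 : MemLp g (ENNReal.ofReal 2) μ := by
    rw [show ENNReal.ofReal 2 = 2 by norm_num]; exact hg
  have hCS := integral_mul_norm_le_Lp_mul_Lq hpq h1 hg2
  have hμ : (μ Set.univ).toReal = b - a := by
    simp [μ, Measure.restrict_apply_univ, Real.volume_Ioc, ENNReal.toReal_ofReal (sub_nonneg.2 hab)]
  have e1 : ∫ x, ‖(fun _ : ℝ => (1:ℝ)) x‖ * ‖g x‖ ∂μ = ∫ x, |g x| ∂μ := by
    simp [Real.norm_eq_abs]
  have e2 : ∫ x, ‖(fun _ : ℝ => (1:ℝ)) x‖ ^ (2:ℝ) ∂μ = b - a := by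
    simp [Measure.real, hμ]
  have e3 : ∫ x, ‖g x‖ ^ (2:ℝ) ∂μ = ∫ x, g x ^ 2 ∂μ := by
    refine integral_congr_ae (Filter.Eventually.of_forall fun x => ?_)
    show ‖g x‖ ^ (2:ℝ) = g x ^ 2
    rw [show ((2:ℝ)) = ((2:ℕ):ℝ) by norm_num, Real.rpow_natCast, Real.norm_eq_abs, sq_abs]
  rw [e1, e2, e3] at hCS
  have hI : 0 ≤ ∫ x, g x ^ 2 ∂μ := integral_nonneg fun x => sq_nonneg _
  have hba : (0:ℝ) ≤ b - a := sub_nonneg.2 hab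
  have key : ((b - a) ^ ((1:ℝ)/2) * (∫ x, g x ^ 2 ∂μ) ^ ((1:ℝ)/2)) ^ 2
      = (b - a) * ∫ x, g x ^ 2 ∂μ := by
    rw [mul_pow, ← Real.rpow_natCast ((b-a) ^ ((1:ℝ)/2)) 2,
      ← Real.rpow_natCast ((∫ x, g x ^ 2 ∂μ) ^ ((1:ℝ)/2)) 2,
      ← Real.rpow_mul hba, ← Real.rpow_mul hI]
    norm_num
  have habs : |∫ s in a..b, g s| ≤ ∫ x, |g x| ∂μ := by
    have h := intervalIntegral.abs_integral_le_integral_abs (μ := volume) (f := g) hab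
    rwa [intervalIntegral.integral_of_le hab (f := fun x => |g x|)] at h
  have h0 : (0:ℝ) ≤ (b - a) ^ ((1:ℝ)/2) * (∫ x, g x ^ 2 ∂μ) ^ ((1:ℝ)/2) :=
    mul_nonneg (Real.rpow_nonneg hba _) (Real.rpow_nonneg hI _)
  calc (∫ s in a..b, g s) ^ 2 = |∫ s in a..b, g s| ^ 2 := (sq_abs _).symm
    _ ≤ ((b - a) ^ ((1:ℝ)/2) * (∫ x, g x ^ 2 ∂μ) ^ ((1:ℝ)/2)) ^ 2 := by
        apply pow_le_pow_left₀ (abs_nonneg _) (habs.trans hCS)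
    _ = (b - a) * ∫ x, g x ^ 2 ∂μ := key

lemma part1 : ∀ ε ∈ Ioo (0 : ℝ) 1, ∀ δ ∈ Ioo (0 : ℝ) (1/2), ∀ f : ℝ, 3/4 ≤ f →
      ∀ w : ℝ → ℝ, MemW12slice w → w (-1) = -f → w 1 = f →
        (∃ y ∈ Icc (-1 : ℝ) 1, 1 - |y| < ε ∧ |w y| < δ) →
        (f - δ)^2 / ε ≤ Hslice w := by
  intro ε hε δ hδ f hf w hw hm1 hp1 ⟨y, hy, hy1, hy2⟩
  obtain ⟨hL2, hFTC⟩ := hw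
  set g := deriv w with hg
  haveI : IsFiniteMeasure (volume.restrict (Icc (-1:ℝ) 1)) :=
    ⟨by rw [Measure.restrict_apply_univ]; exact measure_Icc_lt_top⟩
  have hint : IntegrableOn g (Icc (-1:ℝ) 1) := hL2.integrable one_le_two
  have hII : ∀ a b : ℝ, -1 ≤ a → b ≤ 1 → a ≤ b → IntervalIntegrable g volume a b := by
    intro a b ha hb hab
    exact (hint.mono_set (by rw [uIcc_of_le hab]; exact Icc_subset_Icc ha hb)).intervalIntegrable
  have hsqint : IntegrableOn (fun s => g s ^ 2) (Icc (-1:ℝ) 1) := hL2.integrable_sq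
  set I : ℝ := ∫ s in Icc (-1:ℝ) 1, g s ^ 2 with hI
  have hInn : 0 ≤ I := setIntegral_nonneg measurableSet_Icc fun x _ => sq_nonneg _
  have hmono : ∀ a b : ℝ, -1 ≤ a → b ≤ 1 →
      (∫ s in Ioc a b, g s ^ 2) ≤ I := by
    intro a b ha hb
    refine setIntegral_mono_set hsqint
      (Filter.Eventually.of_forall fun x => sq_nonneg _) ?_
    exact HasSubset.Subset.eventuallyLE (Ioc_subset_Icc_self.trans (Icc_subset_Icc ha hb))
  have hHI : I ≤ Hslice w := by
    have : (0:ℝ) ≤ (volume {y ∈ Icc (-1 : ℝ) 1 | w y ≠ 0}).toReal := ENNReal.toReal_nonneg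
    simp only [Hslice]; linarith
  have hfd : (0:ℝ) < f - δ := by
    have := hδ.2; linarith
  -- key: (f - δ)^2 ≤ ε * I
  have hkey : (f - δ)^2 ≤ ε * I := by
    rcases le_or_gt 0 y with hy0 | hy0
    · -- y ≥ 0 : use interval [y, 1]
      have hya : |y| = y := abs_of_nonneg hy0
      have h1y : 1 - y < ε := by rwa [hya] at hy1
      have hgsub : MemLp g 2 (volume.restrict (Ioc y 1)) :=
        hL2.mono_measure (Measure.restrict_mono
          (Ioc_subset_Icc_self.trans (Icc_subset_Icc hy.1 le_rfl)) le_rfl)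
      have hdiff : w 1 - w y = ∫ s in y..(1:ℝ), g s := by
        rw [hFTC 1 (by constructor <;> norm_num), hFTC y hy]
        have := intervalIntegral.integral_interval_sub_left
          (hII (-1) 1 le_rfl le_rfl (by norm_num)) (hII (-1) y le_rfl hy.2 hy.1)
        linarith [this]
      have hlow : f - δ ≤ |w 1 - w y| := by
        have h1 : |w 1| = f := by rw [hp1, abs_of_nonneg (by linarith)]
        calc f - δ ≤ |w 1| - |w y| := by rw [h1]; linarith
          _ ≤ |w 1 - w y| := abs_sub_abs_le_abs_sub _ _
      have hcs := cs_aux hy.2 hgsub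
      have hmon := hmono y 1 hy.1 le_rfl
      have hsq : (f - δ)^2 ≤ (∫ s in y..(1:ℝ), g s)^2 := by
        rw [← hdiff, ← sq_abs (w 1 - w y)]
        exact pow_le_pow_left₀ (le_of_lt hfd) hlow 2
      have hIle : (1 - y) * (∫ s in Ioc y 1, g s ^ 2) ≤ ε * I := by
        have h2 : (0:ℝ) ≤ ∫ s in Ioc y 1, g s ^ 2 :=
          setIntegral_nonneg measurableSet_Ioc fun x _ => sq_nonneg _
        nlinarith [mul_le_mul_of_nonneg_left hmon (by linarith [hy.2] : (0:ℝ) ≤ 1 - y),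
          mul_le_mul_of_nonneg_right (le_of_lt h1y) hInn]
      linarith [hsq.trans (hcs.trans hIle)]
    · -- y < 0 : use interval [-1, y]
      have hya : |y| = -y := abs_of_neg hy0
      have h1y : 1 + y < ε := by rw [hya] at hy1; linarith
      have hgsub : MemLp g 2 (volume.restrict (Ioc (-1) y)) :=
        hL2.mono_measure (Measure.restrict_mono
          (Ioc_subset_Icc_self.trans (Icc_subset_Icc le_rfl hy.2)) le_rfl)
      have hdiff : w y - w (-1) = ∫ s in (-1:ℝ)..y, g s := by
        rw [hFTC y hy]; ring
      have hlow : f - δ ≤ |w y - w (-1)| := by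
        have h1 : |w (-1)| = f := by rw [hm1, abs_of_nonpos (by linarith), neg_neg]
        calc f - δ ≤ |w (-1)| - |w y| := by rw [h1]; linarith
          _ ≤ |w y - w (-1)| := by rw [abs_sub_comm]; exact abs_sub_abs_le_abs_sub _ _
      have hcs := cs_aux hy.1 hgsub
      have hmon := hmono (-1) y le_rfl hy.2
      have hsq : (f - δ)^2 ≤ (∫ s in (-1:ℝ)..y, g s)^2 := by
        rw [← hdiff, ← sq_abs (w y - w (-1))]
        exact pow_le_pow_left₀ (le_of_lt hfd) hlow 2
      have hIle : (y - (-1)) * (∫ s in Ioc (-1:ℝ) y, g s ^ 2) ≤ ε * I := by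
        have h2 : (0:ℝ) ≤ ∫ s in Ioc (-1:ℝ) y, g s ^ 2 :=
          setIntegral_nonneg measurableSet_Ioc fun x _ => sq_nonneg _
        nlinarith [mul_le_mul_of_nonneg_left hmon (by linarith [hy.1] : (0:ℝ) ≤ y - (-1)),
          mul_le_mul_of_nonneg_right (le_of_lt h1y) hInn]
      linarith [hsq.trans (hcs.trans hIle)]
  rw [div_le_iff₀ hε.1] at *
  calc (f - δ)^2 ≤ ε * I := hkey
    _ ≤ Hslice w * ε := by nlinarith [hε.1]

/-- if `w` is small somewhere near `y = ±1`, its slice energy is large: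
`H(w) ≥ (f - δ)²/ε`; in particular with `ε = 1/44`, `δ = 1/4` and `3/4 ≤ f ≤ 2`,
`H(w) ≥ H(v) + 1` for any `v` with `H(v) ≤ 10`. -/
theorem statement11 :
    (∀ ε ∈ Ioo (0 : ℝ) 1, ∀ δ ∈ Ioo (0 : ℝ) (1/2), ∀ f : ℝ, 3/4 ≤ f →
      ∀ w : ℝ → ℝ, MemW12slice w → w (-1) = -f → w 1 = f →
        (∃ y ∈ Icc (-1 : ℝ) 1, 1 - |y| < ε ∧ |w y| < δ) →
        (f - δ)^2 / ε ≤ Hslice w) ∧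
    (∀ f : ℝ, 3/4 ≤ f → f ≤ 2 →
      ∀ w : ℝ → ℝ, MemW12slice w → w (-1) = -f → w 1 = f →
        (∃ y ∈ Icc (-1 : ℝ) 1, 1 - |y| < 1/44 ∧ |w y| < 1/4) →
        ∀ v : ℝ → ℝ, Hslice v ≤ 10 → Hslice v + 1 ≤ Hslice w) := by
  refine ⟨part1, ?_⟩
  rintro f hf _ w hw hm1 hp1 ⟨y, hy, hy1, hy2⟩ v hv
  have h := part1 (1/44) (by norm_num) (1/4) (by norm_num) f hf w hw hm1 hp1 ⟨y, hy, hy1, hy2⟩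
  have h11 : (11:ℝ) ≤ (f - 1/4)^2 / (1/44) := by nlinarith
  linarith
end
end

section
/- There exists a constant C > 0 such that the following holds for every f with 1 ≤ f ≤ 2 and every ε ∈ (0,1). Let v(y) = f·y on [−1,1], so H(v) = 2f² + 2. If w ∈ W^{1,2}([−1,1]) satisfies w(−1) = −f, w(1) = f, and H(w) ≤ H(v) + ε, then ‖w − v‖_{L^∞([−1,1])} ≤ C·ε^{1/2}. -/
open MeasureTheory Set

noncomputable section

lemma cs_Ioc (g : ℝ → ℝ) (x y : ℝ) (hxy : x ≤ y)
    (hg : IntegrableOn g (Ioc x y)) (hg2 : IntegrableOn (fun t => g t ^ 2) (Ioc x y)) :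
    (∫ t in Ioc x y, g t) ^ 2 ≤ (y - x) * ∫ t in Ioc x y, g t ^ 2 := by
  rcases eq_or_lt_of_le hxy with h | h
  · simp [← h]
  set V := y - x with hV
  have hV0 : 0 < V := sub_pos.2 h
  set m := ∫ t in Ioc x y, g t with hm
  set I := ∫ t in Ioc x y, g t ^ 2 with hI
  have hvol : (volume (Ioc x y)).toReal = V := by
    simp [Real.volume_Ioc, ENNReal.toReal_ofReal (sub_nonneg.2 hxy)]
    rfl
  have h0 : 0 ≤ ∫ t in Ioc x y, (V * g t - m) ^ 2 :=
    integral_nonneg fun t => sq_nonneg _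
  have hint1 : IntegrableOn (fun t => V ^ 2 * g t ^ 2 - 2 * V * m * g t) (Ioc x y) :=
    (hg2.const_mul _).sub (hg.const_mul _)
  have hint2 : IntegrableOn (fun _ : ℝ => m ^ 2) (Ioc x y) :=
    integrableOn_const measure_Ioc_lt_top.ne
  have hexp : ∫ t in Ioc x y, (V * g t - m) ^ 2
      = V ^ 2 * I - (2 * V * m) * m + m ^ 2 * V := by
    have e1 : (fun t => (V * g t - m) ^ 2)
        = fun t => (V ^ 2 * g t ^ 2 - (2 * V * m) * g t) + m ^ 2 := by
      funext t; ring
    rw [e1, integral_add hint1 hint2, integral_sub (hg2.const_mul _) (hg.const_mul _),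
      integral_const_mul, integral_const_mul, setIntegral_const, (show volume.real (Ioc x y) = V from hvol)]
    simp [smul_eq_mul, ← hm, ← hI]; ring
  nlinarith [h0, hexp, hV0]

lemma amgm_half (a t X : ℝ) (ht : 0 ≤ t) (hX : 0 ≤ X) (ha : 0 ≤ a) (h : a ^ 2 ≤ t * X) :
    2 * a ≤ t + X := by
  nlinarith [sq_nonneg (t - X), sq_nonneg (t + X - 2*a)]

set_option maxHeartbeats 1000000 in
lemma key2 (A B t s X Y L : ℝ) (ht : 0 ≤ t) (hs : 0 ≤ s)
    (hX : 0 ≤ X) (hY : 0 ≤ Y) (hAX : A ^ 2 ≤ t * X) (hBY : B ^ 2 ≤ s * Y)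
    (hts : t + s ≤ L) (hL0 : 0 < L) :
    (L ≤ |A| + |B| → (B - A) ^ 2 + L ^ 2 ≤ L * (X + Y + t + s)) ∧
      2 * (|A| + |B|) ≤ X + Y + t + s := by
  have ha2 : |A| ^ 2 = A ^ 2 := sq_abs A
  have hb2 : |B| ^ 2 = B ^ 2 := sq_abs B
  set a := |A| with hadef
  set b := |B| with hbdef
  have ha : 0 ≤ a := abs_nonneg A
  have hb : 0 ≤ b := abs_nonneg B
  have hA' : a ^ 2 ≤ t * X := by rw [ha2]; exact hAX
  have hB' : b ^ 2 ≤ s * Y := by rw [hb2]; exact hBY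
  constructor
  · intro hc
    have hBA : (B - A) ^ 2 ≤ (a + b) ^ 2 := by
      have h1 : |B - A| ≤ |B| + |A| := abs_sub B A
      nlinarith [abs_nonneg (B - A), sq_abs (B - A)]
    have main : (a + b) ^ 2 + L ^ 2 ≤ L * (X + Y + t + s) := by
      rcases hs.lt_or_eq with hs0 | hs0
      · rcases ht.lt_or_eq with ht0 | ht0
        · -- t > 0, s > 0
          have f4 : t * s * (a + b) ^ 2 ≤ (t + s) * (s * a ^ 2 + t * b ^ 2) := by
            nlinarith [sq_nonneg (s * a - t * b)]
          have hX' : s * a ^ 2 ≤ s * (t * X) := by nlinarith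
          have hY' : t * b ^ 2 ≤ t * (s * Y) := by nlinarith
          have f6 : t * s * (a + b) ^ 2 ≤ (t + s) * (t * s * (X + Y)) := by
            nlinarith [add_pos ht0 hs0]
          have f7 : (a + b) ^ 2 ≤ (t + s) * (X + Y) := by
            have hts' : 0 < t * s := mul_pos ht0 hs0
            nlinarith [f6]
          have hσ : 0 < t + s := add_pos ht0 hs0
          nlinarith [mul_le_mul_of_nonneg_left f7 hL0.le,
            mul_nonneg (sub_nonneg.2 hts)
              (show 0 ≤ (a + b) ^ 2 - (t + s) * L by nlinarith), hσ]
        · -- t = 0, so a = 0, s > 0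
          have ha0 : a = 0 := by
            have hA'' := hA'
            rw [← ht0] at hA''
            nlinarith [hA'']
          rw [ha0] at hc ⊢
          rw [← ht0]
          have hbL : L ≤ b := by linarith
          have h1 : 0 ≤ b ^ 2 - L * s := by
            nlinarith [mul_nonneg (sub_nonneg.2 hbL) (show (0:ℝ) ≤ b + L by linarith)]
          have goal' : s * ((0 + b) ^ 2 + L ^ 2) ≤ s * (L * (X + Y + 0 + s)) := by
            nlinarith [mul_le_mul_of_nonneg_left hB' hL0.le,
              mul_nonneg (sub_nonneg.2 (show s ≤ L by linarith)) h1,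
              mul_nonneg (mul_nonneg hs hL0.le) hX]
          exact le_of_mul_le_mul_left (by linarith) hs0
      · -- s = 0, so b = 0
        have hb0 : b = 0 := by
          have hB'' := hB'
          rw [← hs0] at hB''
          nlinarith [hB'']
        rw [hb0] at hc ⊢
        rw [← hs0]
        have haL : L ≤ a := by linarith
        have ht0 : 0 < t := by
          rcases ht.lt_or_eq with h | h
          · exact h
          · exfalso
            have hA'' := hA'
            rw [← h] at hA''
            nlinarith [hA'']
        have h1 : 0 ≤ a ^ 2 - L * t := by
          nlinarith [mul_nonneg (sub_nonneg.2 haL) (show (0:ℝ) ≤ a + L by linarith)]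
        have goal' : t * ((a + 0) ^ 2 + L ^ 2) ≤ t * (L * (X + Y + t + 0)) := by
          nlinarith [mul_le_mul_of_nonneg_left hA' hL0.le,
            mul_nonneg (sub_nonneg.2 (show t ≤ L by linarith)) h1,
            mul_nonneg (mul_nonneg ht hL0.le) hY]
        exact le_of_mul_le_mul_left (by linarith) ht0
    nlinarith [hBA]
  · have h1 : 2 * a ≤ t + X := amgm_half a t X ht hX ha hA'
    have h2 : 2 * b ≤ s + Y := amgm_half b s Y hs hY hb hB'
    linarith

lemma half_bound (g W : ℝ → ℝ) (hWc : Continuous W) (α β : ℝ) (hαβ : α < β)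
    (hg : IntegrableOn g (Ioc α β)) (hg2 : IntegrableOn (fun t => g t ^ 2) (Ioc α β))
    (hFTC : ∀ x y, α ≤ x → x ≤ y → y ≤ β → W y - W x = ∫ s in Ioc x y, g s) :
    ∃ S : Set ℝ, S ⊆ Ico α β ∧ MeasurableSet S ∧ (∀ y ∈ S, W y ≠ 0) ∧
      ((W β - W α) ^ 2 + (β - α) ^ 2
          ≤ (β - α) * ((∫ t in Ioc α β, g t ^ 2) + (volume S).toReal) ∨
        (|W α| + |W β| ≤ β - α ∧
          2 * (|W α| + |W β|) ≤ (∫ t in Ioc α β, g t ^ 2) + (volume S).toReal)) := by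
  have hE : 0 ≤ ∫ t in Ioc α β, g t ^ 2 := integral_nonneg fun t => sq_nonneg _
  have hL0 : 0 < β - α := sub_pos.2 hαβ
  set Z : Set ℝ := Icc α β ∩ W ⁻¹' {0} with hZdef
  by_cases hZ : Z.Nonempty
  · -- there are zeros
    have hZc : IsClosed Z := isClosed_Icc.inter (isClosed_singleton.preimage hWc)
    have hbb : BddBelow Z := (bddBelow_Icc (a := β) (b := α)).mono inter_subset_left
    have hba : BddAbove Z := (bddAbove_Icc (a := α) (b := β)).mono inter_subset_left
    set p := sInf Z with hpdef
    set q := sSup Z with hqdef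
    have hp : p ∈ Z := hZc.csInf_mem hZ hbb
    have hq : q ∈ Z := hZc.csSup_mem hZ hba
    have hpq : p ≤ q := csInf_le_csSup hZ hbb hba
    have hαp : α ≤ p := hp.1.1
    have hqβ : q ≤ β := hq.1.2
    have hWp : W p = 0 := hp.2
    have hWq : W q = 0 := hq.2
    refine ⟨Ico α p ∪ Ioo q β, ?_, (measurableSet_Ico.union measurableSet_Ioo), ?_, ?_⟩
    · rintro y (hy | hy)
      · exact ⟨hy.1, lt_of_lt_of_le hy.2 (hpq.trans hqβ)⟩
      · exact ⟨hαp.trans (hpq.trans hy.1.le), hy.2⟩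
    · rintro y (hy | hy) hy0
      · exact absurd (csInf_le hbb ⟨⟨hy.1, (hy.2.le.trans (hpq.trans hqβ))⟩, hy0⟩) (not_le.2 hy.2)
      · exact absurd (le_csSup hba ⟨⟨hαp.trans (hpq.trans hy.1.le), hy.2.le⟩, hy0⟩) (not_le.2 hy.1)
    · -- the main estimate
      have hdisjS : Disjoint (Ico α p) (Ioo q β) := by
        rw [Set.disjoint_left]
        rintro x hx hx'
        exact absurd (hx.2.trans_le hpq) (not_lt.2 hx'.1.le)
      have hvolS : (volume (Ico α p ∪ Ioo q β)).toReal = (p - α) + (β - q) := by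
        rw [measure_union hdisjS measurableSet_Ioo, Real.volume_Ico, Real.volume_Ioo,
          ENNReal.toReal_add ENNReal.ofReal_ne_top ENNReal.ofReal_ne_top,
          ENNReal.toReal_ofReal (by linarith), ENNReal.toReal_ofReal (by linarith)]
      set Ea := ∫ t in Ioc α p, g t ^ 2 with hEa
      set Ec := ∫ t in Ioc q β, g t ^ 2 with hEc
      have hEa0 : 0 ≤ Ea := integral_nonneg fun t => sq_nonneg _
      have hEc0 : 0 ≤ Ec := integral_nonneg fun t => sq_nonneg _
      have hIa : IntegrableOn (fun t => g t ^ 2) (Ioc α p) :=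
        hg2.mono_set (Ioc_subset_Ioc le_rfl (hpq.trans hqβ))
      have hIc : IntegrableOn (fun t => g t ^ 2) (Ioc q β) :=
        hg2.mono_set (Ioc_subset_Ioc (hαp.trans hpq) le_rfl)
      have hdisjI : Disjoint (Ioc α p) (Ioc q β) := by
        rw [Set.disjoint_left]
        rintro x hx hx'
        exact absurd (hx.2.trans hpq) (not_le.2 hx'.1)
      have hEsplit : Ea + Ec ≤ ∫ t in Ioc α β, g t ^ 2 := by
        rw [← setIntegral_union hdisjI measurableSet_Ioc hIa hIc]
        refine setIntegral_mono_set hg2 (Filter.Eventually.of_forall fun t => sq_nonneg _) ?_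
        refine HasSubset.Subset.eventuallyLE ?_
        exact union_subset (Ioc_subset_Ioc le_rfl (hpq.trans hqβ))
          (Ioc_subset_Ioc (hαp.trans hpq) le_rfl)
      have hcs1 : (W α) ^ 2 ≤ (p - α) * Ea := by
        have h := cs_Ioc g α p hαp (hg.mono_set (Ioc_subset_Ioc le_rfl (hpq.trans hqβ))) hIa
        rw [← hFTC α p le_rfl hαp (hpq.trans hqβ), hWp] at h
        nlinarith [h]
      have hcs2 : (W β) ^ 2 ≤ (β - q) * Ec := by
        have h := cs_Ioc g q β hqβ (hg.mono_set (Ioc_subset_Ioc (hαp.trans hpq) le_rfl)) hIc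
        rw [← hFTC q β (hαp.trans hpq) hqβ le_rfl, hWq] at h
        nlinarith [h]
      have hk := key2 (W α) (W β) (p - α) (β - q) Ea Ec (β - α)
        (by linarith) (by linarith) hEa0 hEc0 hcs1 hcs2 (by linarith) hL0
      rw [hvolS]
      rcases le_or_gt (β - α) (|W α| + |W β|) with hc | hc
      · left
        calc (W β - W α) ^ 2 + (β - α) ^ 2
            ≤ (β - α) * (Ea + Ec + (p - α) + (β - q)) := hk.1 hc
          _ ≤ (β - α) * ((∫ t in Ioc α β, g t ^ 2) + ((p - α) + (β - q))) := by
              apply mul_le_mul_of_nonneg_left _ hL0.le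
              linarith
      · right
        exact ⟨hc.le, by linarith [hk.2]⟩
  · -- no zeros
    refine ⟨Ico α β, le_rfl, measurableSet_Ico, ?_, ?_⟩
    · intro y hy hy0
      exact hZ ⟨y, ⟨hy.1, hy.2.le⟩, hy0⟩
    · left
      have h := cs_Ioc g α β hαβ.le hg hg2
      rw [← hFTC α β le_rfl hαβ.le le_rfl] at h
      have hvol : (volume (Ico α β)).toReal = β - α := by
        rw [Real.volume_Ico, ENNReal.toReal_ofReal (by linarith)]
      rw [hvol]
      nlinarith [h]

lemma caseNN (f t a R₁ R₂ ε : ℝ) (hf : 1 ≤ f) (ht1 : -1 < t) (ht2 : t < 1)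
    (h1 : (a + f)^2 + (1+t)^2 ≤ (1+t) * R₁) (h2 : (f - a)^2 + (1-t)^2 ≤ (1-t) * R₂)
    (h3 : R₁ + R₂ ≤ 2*f^2 + 2 + ε) (hε : 0 < ε) :
    (a - f*t)^2 ≤ 2*ε := by
  have hL₁0 : (0:ℝ) < 1 + t := by linarith
  have hL₂0 : (0:ℝ) < 1 - t := by linarith
  nlinarith [mul_le_mul_of_nonneg_left h1 hL₂0.le, mul_le_mul_of_nonneg_left h2 hL₁0.le,
    mul_le_mul_of_nonneg_left h3 (mul_pos hL₁0 hL₂0).le,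
    mul_nonneg hε.le (sq_nonneg t), mul_pos hL₁0 hL₂0,
    mul_nonneg (mul_nonneg hε.le (sq_nonneg t)) hL₁0.le]

lemma caseDN (f t a R₁ R₂ ε : ℝ) (hf : 1 ≤ f) (ht1 : -1 < t) (ht2 : t < 1)
    (hdef : f + |a| ≤ 1 + t)
    (h1 : 2*(f + |a|) ≤ R₁) (h2 : (f - a)^2 + (1-t)^2 ≤ (1-t) * R₂)
    (h3 : R₁ + R₂ ≤ 2*f^2 + 2 + ε) (hε : 0 < ε) :
    (a - f*t)^2 ≤ 2*ε := by
  have hL₂0 : (0:ℝ) < 1 - t := by linarith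
  rcases le_or_gt 0 a with ha | ha
  · have hb' : |a| = a := abs_of_nonneg ha
    rw [hb'] at hdef h1
    nlinarith [mul_le_mul_of_nonneg_left h3 hL₂0.le, mul_le_mul_of_nonneg_left h1 hL₂0.le,
      sq_nonneg (a - f*t), sq_nonneg (f - 1), mul_nonneg hε.le hL₂0.le,
      mul_nonneg (sub_nonneg.2 hf) hL₂0.le, sq_nonneg (f + a - 1 - t), sq_nonneg t]
  · have hb' : |a| = -a := abs_of_neg ha
    rw [hb'] at hdef h1
    nlinarith [mul_le_mul_of_nonneg_left h3 hL₂0.le, mul_le_mul_of_nonneg_left h1 hL₂0.le,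
      sq_nonneg (a - f*t), sq_nonneg (f - 1), mul_nonneg hε.le hL₂0.le,
      mul_nonneg (sub_nonneg.2 hf) hL₂0.le, sq_nonneg (f - a - 1 - t), sq_nonneg t]

lemma caseND (f t a R₁ R₂ ε : ℝ) (hf : 1 ≤ f) (ht1 : -1 < t) (ht2 : t < 1)
    (hdef : f + |a| ≤ 1 - t)
    (h1 : (a + f)^2 + (1+t)^2 ≤ (1+t) * R₁) (h2 : 2*(f + |a|) ≤ R₂)
    (h3 : R₁ + R₂ ≤ 2*f^2 + 2 + ε) (hε : 0 < ε) :
    (a - f*t)^2 ≤ 2*ε := by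
  have h := caseDN f (-t) (-a) R₂ R₁ ε hf (by linarith) (by linarith)
    (by rw [abs_neg]; linarith)
    (by rw [abs_neg]; linarith)
    (by nlinarith [h1]) (by linarith) hε
  nlinarith [h]

lemma caseDD (f t a ε : ℝ) (hf : 1 ≤ f)
    (hdef1 : f + |a| ≤ 1 + t) (hdef2 : f + |a| ≤ 1 - t) (hε : 0 < ε) :
    (a - f*t)^2 ≤ 2*ε := by
  have ha0 : |a| = 0 := le_antisymm (by linarith [abs_nonneg a]) (abs_nonneg a)
  have ha : a = 0 := abs_eq_zero.1 ha0
  have hf1 : f = 1 := by nlinarith [abs_nonneg a]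
  have ht : t = 0 := by rw [ha0, hf1] at hdef1 hdef2; linarith
  rw [ha, ht]
  nlinarith

set_option maxHeartbeats 1000000 in
/-- stability of the linear slice minimizer `v(y) = f·y` (for `1 ≤ f ≤ 2`,
`H(v) = 2f² + 2`): near-minimizers are uniformly close to `v`. -/
theorem statement14 :
    ∃ C : ℝ, 0 < C ∧
      ∀ f : ℝ, 1 ≤ f → f ≤ 2 → ∀ ε ∈ Ioo (0 : ℝ) 1,
        ∀ w : ℝ → ℝ, MemW12slice w → w (-1) = -f → w 1 = f →
          Hslice w ≤ Hslice (fun y => f * y) + ε →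
          ∀ y ∈ Icc (-1 : ℝ) 1, |w y - f * y| ≤ C * Real.sqrt ε := by
  refine ⟨2, two_pos, ?_⟩
  intro f hf1 hf2 ε hε w hw hwm hwp hH
  obtain ⟨hw2, hwFTC⟩ := hw
  set g := deriv w with hgdef
  have hfpos : (0:ℝ) < f := by linarith
  have hf0 : f ≠ 0 := ne_of_gt hfpos
  -- value of Hslice on the linear function
  have hHv : Hslice (fun y => f * y) = 2 * f ^ 2 + 2 := by
    have hd : (deriv fun y : ℝ => f * y) = fun _ => f := by
      funext y
      simpa using ((hasDerivAt_id y).const_mul f).deriv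
    have h1 : (∫ y in Icc (-1:ℝ) 1, (deriv (fun y => f * y) y) ^ 2) = 2 * f ^ 2 := by
      rw [hd]
      simp [Real.volume_Icc]
      exact Or.inl (by norm_num)
    have h2 : {y ∈ Icc (-1:ℝ) 1 | f * y ≠ 0} = Icc (-1:ℝ) 1 \ {0} := by
      ext y
      simp [mul_eq_zero, hf0, mem_diff]
    unfold Hslice
    rw [h1, h2, measure_diff_null (by simp : volume ({(0:ℝ)} : Set ℝ) = 0),
      Real.volume_Icc]
    norm_num
  rw [hHv] at hH
  -- integrability
  haveI hfin : IsFiniteMeasure (volume.restrict (Icc (-1:ℝ) 1)) := by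
    constructor
    rw [Measure.restrict_apply_univ, Real.volume_Icc]
    exact ENNReal.ofReal_lt_top
  have hgInt : IntegrableOn g (Icc (-1:ℝ) 1) := hw2.integrable one_le_two
  have hg2Int : IntegrableOn (fun y => g y ^ 2) (Icc (-1:ℝ) 1) := hw2.integrable_sq
  -- FTC in set-integral form
  have hII : ∀ t ∈ Icc (-1:ℝ) 1, IntervalIntegrable g volume (-1) t := by
    intro t ht
    apply IntegrableOn.intervalIntegrable
    rw [uIcc_of_le ht.1]
    exact hgInt.mono_set (Icc_subset_Icc_right ht.2)
  have hFTC : ∀ x y : ℝ, -1 ≤ x → x ≤ y → y ≤ 1 → w y - w x = ∫ s in Ioc x y, g s := by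
    intro x y hx hxy hy
    have hx' : x ∈ Icc (-1:ℝ) 1 := ⟨hx, hxy.trans hy⟩
    have hy' : y ∈ Icc (-1:ℝ) 1 := ⟨hx.trans hxy, hy⟩
    have h := intervalIntegral.integral_interval_sub_left (hII y hy') (hII x hx')
    rw [intervalIntegral.integral_of_le hxy] at h
    rw [hwFTC y hy', hwFTC x hx', ← h]
    ring
  -- continuous representative
  set W : ℝ → ℝ := fun t => w (-1) + ∫ s in (-1:ℝ)..(max (-1) (min 1 t)), g s with hWdef
  have hclamp : ∀ t, max (-1:ℝ) (min 1 t) ∈ Icc (-1:ℝ) 1 :=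
    fun t => ⟨le_max_left _ _, max_le (by norm_num) (min_le_left _ _)⟩
  have hprim : ContinuousOn (fun x => ∫ s in (-1:ℝ)..x, g s) (Icc (-1:ℝ) 1) := by
    have h := intervalIntegral.continuousOn_primitive_interval
      (a := (-1:ℝ)) (b := 1) (μ := volume) (f := g)
      (by rw [uIcc_of_le (by norm_num : (-1:ℝ) ≤ 1)]; exact hgInt)
    rwa [uIcc_of_le (by norm_num : (-1:ℝ) ≤ 1)] at h
  have hWc : Continuous W := by
    apply continuous_const.add
    exact hprim.comp_continuous
      (continuous_const.max (continuous_const.min continuous_id)) hclamp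
  have hWeq : ∀ t, t ∈ Icc (-1:ℝ) 1 → W t = w t := by
    intro t ht
    show w (-1) + ∫ s in (-1:ℝ)..(max (-1) (min 1 t)), g s = w t
    rw [min_eq_right ht.2, max_eq_right ht.1, ← hwFTC t ht]
  -- pointwise estimate
  intro y₀ hy₀
  have hε0 : 0 < ε := hε.1
  have hsq : 0 ≤ Real.sqrt ε := Real.sqrt_nonneg ε
  rcases eq_or_lt_of_le hy₀.1 with hbdry | hlt
  · rw [← hbdry, hwm]
    have : |-f - f * (-1)| = 0 := by norm_num
    rw [this]
    positivity
  rcases eq_or_lt_of_le hy₀.2 with hbdry | hrt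
  · rw [hbdry, hwp]
    have : |f - f * 1| = 0 := by norm_num
    rw [this]
    positivity
  -- interior case
  have hW1 : W (-1) = -f := by rw [hWeq (-1) (by norm_num), hwm]
  have hW2 : W 1 = f := by rw [hWeq 1 (by norm_num), hwp]
  have hWy : W y₀ = w y₀ := hWeq y₀ hy₀
  set a := w y₀ with hadef
  obtain ⟨S₁, hS₁sub, hS₁m, hS₁ne, halt₁⟩ := half_bound g W hWc (-1) y₀ hlt
    (hgInt.mono_set (Ioc_subset_Icc_self.trans (Icc_subset_Icc_right hy₀.2)))
    (hg2Int.mono_set (Ioc_subset_Icc_self.trans (Icc_subset_Icc_right hy₀.2)))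
    (fun x y hx hxy hy => by
      rw [hWeq x ⟨hx, (hxy.trans hy).trans hy₀.2⟩, hWeq y ⟨hx.trans hxy, hy.trans hy₀.2⟩]
      exact hFTC x y hx hxy (hy.trans hy₀.2))
  obtain ⟨S₂, hS₂sub, hS₂m, hS₂ne, halt₂⟩ := half_bound g W hWc y₀ 1 hrt
    (hgInt.mono_set (Ioc_subset_Icc_self.trans (Icc_subset_Icc_left hy₀.1)))
    (hg2Int.mono_set (Ioc_subset_Icc_self.trans (Icc_subset_Icc_left hy₀.1)))
    (fun x y hx hxy hy => by
      rw [hWeq x ⟨hy₀.1.trans hx, hxy.trans hy⟩, hWeq y ⟨hy₀.1.trans (hx.trans hxy), hy⟩]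
      exact hFTC x y (hy₀.1.trans hx) hxy hy)
  -- measures combine
  set A := {y ∈ Icc (-1:ℝ) 1 | w y ≠ 0} with hAdef
  have hAfin : volume A ≠ ⊤ := by
    refine ne_of_lt (lt_of_le_of_lt (measure_mono (sep_subset _ _)) ?_)
    rw [Real.volume_Icc]
    exact ENNReal.ofReal_lt_top
  have hS₁fin : volume S₁ ≠ ⊤ := by
    refine ne_of_lt (lt_of_le_of_lt (measure_mono hS₁sub) ?_)
    rw [Real.volume_Ico]
    exact ENNReal.ofReal_lt_top
  have hS₂fin : volume S₂ ≠ ⊤ := by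
    refine ne_of_lt (lt_of_le_of_lt (measure_mono hS₂sub) ?_)
    rw [Real.volume_Ico]
    exact ENNReal.ofReal_lt_top
  have hSsub : S₁ ∪ S₂ ⊆ A := by
    rintro y (hy | hy)
    · have hmem : y ∈ Icc (-1:ℝ) 1 := ⟨(hS₁sub hy).1, ((hS₁sub hy).2.le.trans hy₀.2)⟩
      exact ⟨hmem, fun h0 => hS₁ne y hy (by rw [hWeq y hmem]; exact h0)⟩
    · have hmem : y ∈ Icc (-1:ℝ) 1 := ⟨hy₀.1.trans (hS₂sub hy).1, (hS₂sub hy).2.le⟩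
      exact ⟨hmem, fun h0 => hS₂ne y hy (by rw [hWeq y hmem]; exact h0)⟩
  have hdisjS : Disjoint S₁ S₂ :=
    (Set.Ico_disjoint_Ico_same).mono hS₁sub hS₂sub
  have hMsum : (volume S₁).toReal + (volume S₂).toReal ≤ (volume A).toReal := by
    rw [← ENNReal.toReal_add hS₁fin hS₂fin, ← measure_union hdisjS hS₂m]
    exact ENNReal.toReal_mono hAfin (measure_mono hSsub)
  -- energies combine
  have hIoc1 : IntegrableOn (fun y => g y ^ 2) (Ioc (-1:ℝ) y₀) :=
    hg2Int.mono_set (Ioc_subset_Icc_self.trans (Icc_subset_Icc_right hy₀.2))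
  have hIoc2 : IntegrableOn (fun y => g y ^ 2) (Ioc y₀ (1:ℝ)) :=
    hg2Int.mono_set (Ioc_subset_Icc_self.trans (Icc_subset_Icc_left hy₀.1))
  have hE : (∫ t in Ioc (-1:ℝ) y₀, g t ^ 2) + (∫ t in Ioc y₀ (1:ℝ), g t ^ 2)
      = ∫ y in Icc (-1:ℝ) 1, g y ^ 2 := by
    rw [integral_Icc_eq_integral_Ioc, ← Ioc_union_Ioc_eq_Ioc hy₀.1 hy₀.2,
      setIntegral_union (Set.Ioc_disjoint_Ioc_of_le le_rfl) measurableSet_Ioc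
        hIoc1 hIoc2]
  -- total bound
  set E₁ := ∫ t in Ioc (-1:ℝ) y₀, g t ^ 2 with hE₁def
  set E₂ := ∫ t in Ioc y₀ (1:ℝ), g t ^ 2 with hE₂def
  set R₁ := E₁ + (volume S₁).toReal with hR₁def
  set R₂ := E₂ + (volume S₂).toReal with hR₂def
  have htot : R₁ + R₂ ≤ 2 * f ^ 2 + 2 + ε := by
    have hHw : Hslice w = (∫ y in Icc (-1:ℝ) 1, g y ^ 2) + (volume A).toReal := rfl
    rw [hHw] at hH
    rw [hR₁def, hR₂def]
    linarith [hMsum, hE.le, hE.ge]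
  -- the four cases
  have habs1 : |W (-1)| = f := by rw [hW1, abs_neg, abs_of_pos hfpos]
  have habs2 : |W 1| = f := by rw [hW2, abs_of_pos hfpos]
  have hd2 : (a - f * y₀) ^ 2 ≤ 2 * ε := by
    rcases halt₁ with h₁ | ⟨h₁c, h₁⟩ <;> rcases halt₂ with h₂ | ⟨h₂c, h₂⟩
    · -- N N
      rw [hWy, hW1] at h₁
      rw [hW2, hWy] at h₂
      refine caseNN f y₀ a R₁ R₂ ε hf1 hlt hrt ?_ ?_ htot hε0
      · ring_nf at h₁ ⊢; linarith
      · ring_nf at h₂ ⊢; linarith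
    · -- N D
      rw [hWy, hW1] at h₁
      rw [habs2, hWy] at h₂c h₂
      refine caseND f y₀ a R₁ R₂ ε hf1 hlt hrt (by linarith [h₂c]) ?_ (by linarith [h₂]) htot hε0
      · ring_nf at h₁ ⊢; linarith
    · -- D N
      rw [habs1, hWy] at h₁c h₁
      rw [hW2, hWy] at h₂
      refine caseDN f y₀ a R₁ R₂ ε hf1 hlt hrt (by linarith [h₁c]) (by linarith [h₁]) ?_ htot hε0
      · ring_nf at h₂ ⊢; linarith
    · -- D D
      rw [habs1, hWy] at h₁c
      rw [habs2, hWy] at h₂c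
      exact caseDD f y₀ a ε hf1 (by linarith [h₁c]) (by linarith [h₂c]) hε0
  -- conclude
  have habs : |a - f * y₀| ≤ Real.sqrt (2 * ε) := by
    rw [← Real.sqrt_sq_eq_abs]
    exact Real.sqrt_le_sqrt hd2
  have h2e : Real.sqrt (2 * ε) ≤ 2 * Real.sqrt ε := by
    rw [Real.sqrt_mul (by norm_num : (0:ℝ) ≤ 2)]
    have h42 : Real.sqrt 2 ≤ 2 := by
      nlinarith [Real.sq_sqrt (by norm_num : (0:ℝ) ≤ 2), Real.sqrt_nonneg 2]
    exact mul_le_mul_of_nonneg_right h42 hsq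
  exact habs.trans h2e
end
end
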